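/- arXiv:2209.09751 — 2 statements merged into one kernel-verified Lean document; each statement's English description precedes it below -/
import Mathlib

section
/- The measure μ_G on G = (-1,1) with density 1/(1-x²) relative to Lebesgue measure is invariant under the group translations: for every a ∈ (-1,1) and every integrable f : (-1,1) → ℂ, ∫_G f(a +_G x) dμ_G(x) = ∫_G f(x) dμ_G(x), where a +_G x = (a+x)/(1+ax). That is, μ_G is a Haar measure on (G, +_G). -/
/-! Substitute `y = a +_G x`, a bijection of `(-1, 1)` with inverse `x = (-a) +_G y`. Its Jacobian
is `(1 - a²) / (1 + a x)²`, and the identity `1 - (a +_G x)² = (1 - a²)(1 - x²) / (1 + a x)²` shows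
that the density `1 / (1 - y²)` is multiplied by exactly the inverse factor. -/

open MeasureTheory

/-- The measure dμ_G = dx/(1-x²) on G = (-1,1). -/
noncomputable def muG : Measure ℝ :=
  (volume.restrict (Set.Ioo (-1 : ℝ) 1)).withDensity
    (fun x => ENNReal.ofReal (1 / (1 - x ^ 2)))

noncomputable def mobiusAdd (a x : ℝ) : ℝ := (a + x) / (1 + a * x)

lemma one_sub_mobiusAdd_sq {a x : ℝ} (h : 1 + a * x ≠ 0) :
    1 - mobiusAdd a x ^ 2 = (1 - a ^ 2) * (1 - x ^ 2) / (1 + a * x) ^ 2 := by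
  unfold mobiusAdd
  field_simp
  ring

lemma mobiusAdd_neg_mobiusAdd {a x : ℝ} (ha : a ^ 2 ≠ 1) (h : 1 + a * x ≠ 0) :
    mobiusAdd (-a) (mobiusAdd a x) = x := by
  have ha' : 1 - a ^ 2 ≠ 0 := sub_ne_zero.mpr (Ne.symm ha)
  have hden : 1 + -a * mobiusAdd a x = (1 - a ^ 2) / (1 + a * x) := by
    unfold mobiusAdd
    field_simp
    ring
  rw [mobiusAdd, hden, mobiusAdd]
  field_simp
  ring

lemma one_add_mul_pos {a x : ℝ} (ha : a ∈ Set.Ioo (-1 : ℝ) 1) (hx : x ∈ Set.Ioo (-1 : ℝ) 1) :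
    0 < 1 + a * x := by
  nlinarith [ha.1, ha.2, hx.1, hx.2]

lemma one_sub_sq_pos {x : ℝ} (hx : x ∈ Set.Ioo (-1 : ℝ) 1) : 0 < 1 - x ^ 2 := by
  nlinarith [hx.1, hx.2]

lemma mapsTo_mobiusAdd {a : ℝ} (ha : a ∈ Set.Ioo (-1 : ℝ) 1) :
    Set.MapsTo (mobiusAdd a) (Set.Ioo (-1) 1) (Set.Ioo (-1) 1) := by
  intro x hx
  have hden := one_add_mul_pos ha hx
  have hpos : 0 < 1 - mobiusAdd a x ^ 2 := by
    rw [one_sub_mobiusAdd_sq hden.ne']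
    have := one_sub_sq_pos ha
    have := one_sub_sq_pos hx
    positivity
  exact abs_lt.mp ((sq_lt_one_iff_abs_lt_one _).mp (by linarith))

lemma bijOn_mobiusAdd {a : ℝ} (ha : a ∈ Set.Ioo (-1 : ℝ) 1) :
    Set.BijOn (mobiusAdd a) (Set.Ioo (-1) 1) (Set.Ioo (-1) 1) := by
  have hna : -a ∈ Set.Ioo (-1 : ℝ) 1 := ⟨by linarith [ha.2], by linarith [ha.1]⟩
  have ha2 : ∀ b ∈ Set.Ioo (-1 : ℝ) 1, b ^ 2 ≠ 1 := fun b hb => by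
    linarith [one_sub_sq_pos hb]
  refine Set.InvOn.bijOn ⟨fun x hx => ?_, fun y hy => ?_⟩
    (mapsTo_mobiusAdd ha) (mapsTo_mobiusAdd hna)
  · exact mobiusAdd_neg_mobiusAdd (ha2 a ha) (one_add_mul_pos ha hx).ne'
  · simpa using mobiusAdd_neg_mobiusAdd (ha2 (-a) hna) (one_add_mul_pos hna hy).ne'

lemma hasDerivAt_mobiusAdd {a x : ℝ} (h : 1 + a * x ≠ 0) :
    HasDerivAt (mobiusAdd a) ((1 - a ^ 2) / (1 + a * x) ^ 2) x := by
  have hnum : HasDerivAt (fun x : ℝ => a + x) 1 x := (hasDerivAt_id x).const_add a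
  have hden : HasDerivAt (fun x : ℝ => 1 + a * x) a x := by
    simpa using ((hasDerivAt_id x).const_mul a).const_add 1
  exact (hnum.div hden h).congr_deriv (by ring)

lemma mobiusAdd_jacobian_mul_density {a x : ℝ} (ha : a ^ 2 ≠ 1) (h : 1 + a * x ≠ 0) :
    (1 - a ^ 2) / (1 + a * x) ^ 2 * (1 / (1 - mobiusAdd a x ^ 2)) = 1 / (1 - x ^ 2) := by
  have ha' : 1 - a ^ 2 ≠ 0 := sub_ne_zero.mpr (Ne.symm ha)
  rw [one_sub_mobiusAdd_sq h, one_div_div, div_mul_div_comm, ← mul_assoc,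
    mul_comm ((1 + a * x) ^ 2), div_mul_cancel_left₀ (mul_ne_zero ha' (pow_ne_zero 2 h)), one_div]

lemma integral_muG (g : ℝ → ℂ) :
    ∫ x, g x ∂muG = ∫ x in Set.Ioo (-1 : ℝ) 1, (1 / (1 - x ^ 2)) • g x := by
  rw [muG, integral_withDensity_eq_integral_toReal_smul (by fun_prop) (by simp)]
  refine setIntegral_congr_fun measurableSet_Ioo fun x hx => ?_
  rw [ENNReal.toReal_ofReal (one_div_pos.mpr (one_sub_sq_pos hx)).le]

theorem stmt_12_general (a : ℝ) (ha : a ∈ Set.Ioo (-1 : ℝ) 1)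
    (f : ℝ → ℂ) :
    ∫ x, f ((a + x) / (1 + a * x)) ∂muG = ∫ x, f x ∂muG := by
  have hbij := bijOn_mobiusAdd ha
  have hderiv : ∀ x ∈ Set.Ioo (-1 : ℝ) 1, HasDerivWithinAt (mobiusAdd a)
      ((1 - a ^ 2) / (1 + a * x) ^ 2) (Set.Ioo (-1) 1) x := fun x hx =>
    (hasDerivAt_mobiusAdd (one_add_mul_pos ha hx).ne').hasDerivWithinAt
  have hcov := integral_image_eq_integral_abs_deriv_smul measurableSet_Ioo hderiv
    hbij.injOn fun y => (1 / (1 - y ^ 2)) • f y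
  rw [hbij.image_eq] at hcov
  rw [integral_muG, integral_muG, hcov]
  refine setIntegral_congr_fun measurableSet_Ioo fun x hx => ?_
  have hden := one_add_mul_pos ha hx
  rw [smul_smul, abs_of_pos (by have := one_sub_sq_pos ha; positivity),
    mobiusAdd_jacobian_mul_density (by linarith [one_sub_sq_pos ha]) hden.ne']
  rfl

/-- μ_G is invariant under group translations x ↦ a +_G x, i.e. it is a Haar
measure on (G, +_G). -/
theorem stmt_12 (a : ℝ) (ha : a ∈ Set.Ioo (-1 : ℝ) 1)
    (f : ℝ → ℂ) (hf : Integrable f muG) :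
    ∫ x, f ((a + x) / (1 + a * x)) ∂muG = ∫ x, f x ∂muG :=
  stmt_12_general a ha f
end

section
/- Let m ∈ ℝ, 0 ≤ ρ, δ ≤ 1. A smooth function a : (-1,1) × ℝ → ℂ satisfies |(𝔇_x)^β ∂_ξ^α a(x,ξ)| ≤ C_{α,β}(1+|ξ|)^{m-ρα+δβ} for all α, β ∈ ℕ and all (x,ξ), where 𝔇_x = -(1-x²)∂_x, if and only if the function ã(t,ξ) := a(-tanh t, ξ) satisfies the Euclidean Hörmander estimates |∂_t^β ∂_ξ^α ã(t,ξ)| ≤ C_{α,β}(1+|ξ|)^{m-ρα+δβ}. Thus a ↦ ã is a bijection between S^m_{ρ,δ}(G×ℝ) and S^m_{ρ,δ}(ℝ×ℝ). -/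
open Set

/-- The group derivative in the first variable: (𝔇_x a)(x,ξ) = -(1-x²)∂ₓa(x,ξ). -/
noncomputable def DGrp (a : ℝ → ℝ → ℂ) : ℝ → ℝ → ℂ :=
  fun x ξ => -(1 - x ^ 2) * deriv (fun y => a y ξ) x

/-- The ordinary derivative in the first variable. -/
noncomputable def Dfst (a : ℝ → ℝ → ℂ) : ℝ → ℝ → ℂ :=
  fun t ξ => deriv (fun s => a s ξ) t

/-- The derivative in the second (frequency) variable. -/
noncomputable def Dsnd (a : ℝ → ℝ → ℂ) : ℝ → ℝ → ℂ :=
  fun x ξ => deriv (fun η => a x η) ξ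

def Uset : Set (ℝ × ℝ) := Set.Ioo (-1 : ℝ) 1 ×ˢ (Set.univ : Set ℝ)

lemma hUopen : IsOpen Uset := isOpen_Ioo.prod isOpen_univ

lemma tanh_mem (t : ℝ) : -Real.tanh t ∈ Set.Ioo (-1 : ℝ) 1 := by
  have hc : 0 < Real.cosh t := Real.cosh_pos t
  have h1 : Real.sinh t < Real.cosh t := by
    nlinarith [Real.cosh_sub_sinh t, Real.exp_pos (-t)]
  have h2 : -Real.cosh t < Real.sinh t := by
    nlinarith [Real.cosh_add_sinh t, Real.exp_pos t]
  rw [Real.tanh_eq_sinh_div_cosh]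
  have h3 : Real.sinh t / Real.cosh t < 1 := (div_lt_one hc).2 h1
  have h4 : -1 < Real.sinh t / Real.cosh t := by rw [lt_div_iff₀ hc]; nlinarith
  exact ⟨by linarith, by linarith⟩

lemma tanh_surj {x : ℝ} (hx : x ∈ Set.Ioo (-1 : ℝ) 1) : ∃ t : ℝ, -Real.tanh t = x := by
  obtain ⟨h1, h2⟩ := hx
  set y : ℝ := (1 - x) / (1 + x) with hy
  have hyp : 0 < y := div_pos (by linarith) (by linarith)
  refine ⟨Real.log y / 2, ?_⟩
  set t := Real.log y / 2 with ht
  have he : Real.exp (2 * t) = y := by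
    rw [ht]; rw [show 2 * (Real.log y / 2) = Real.log y by ring, Real.exp_log hyp]
  have hc : 0 < Real.cosh t := Real.cosh_pos t
  have hs : Real.cosh t + Real.sinh t = Real.exp t := Real.cosh_add_sinh t
  have hd : Real.cosh t - Real.sinh t = Real.exp (-t) := Real.cosh_sub_sinh t
  have hee : Real.exp t * Real.exp t = y := by
    rw [← Real.exp_add]; rw [show t + t = 2 * t by ring]; exact he
  have hde : Real.exp t * Real.exp (-t) = 1 := by
    rw [← Real.exp_add]; simp
  have hepos : 0 < Real.exp t := Real.exp_pos t
  have hy' : y * (1 + x) = 1 - x := by rw [hy, div_mul_cancel₀ _ (by linarith : (1:ℝ)+x ≠ 0)]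
  have hB : Real.cosh t ^ 2 - Real.sinh t ^ 2 = 1 := Real.cosh_sq_sub_sinh_sq t
  have h5 : (Real.cosh t + Real.sinh t) * ((Real.cosh t + Real.sinh t) * (1 + x))
      = (Real.cosh t + Real.sinh t) * ((Real.cosh t - Real.sinh t) * (1 - x)) := by
    have hA : (Real.cosh t + Real.sinh t) ^ 2 * (1 + x) = 1 - x := by
      rw [hs]; nlinarith [hee, hy']
    nlinarith [hA, hB]
  have h6 := mul_left_cancel₀ (by rw [hs]; exact ne_of_gt hepos) h5
  have hsc : Real.sinh t = -x * Real.cosh t := by linear_combination h6 / 2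
  rw [Real.tanh_eq_sinh_div_cosh, hsc, mul_div_assoc, div_self (ne_of_gt hc), mul_one]
  ring

lemma hasDerivAt_neg_tanh (t : ℝ) :
    HasDerivAt (fun s => -Real.tanh s) (-(1 - Real.tanh t ^ 2)) t := by
  have hc : Real.cosh t ≠ 0 := ne_of_gt (Real.cosh_pos t)
  have h := ((Real.hasDerivAt_sinh t).fun_div (Real.hasDerivAt_cosh t) hc).fun_neg
  simp only [← Real.tanh_eq_sinh_div_cosh] at h
  refine h.congr_deriv (Eq.symm ?_)
  have hB : Real.cosh t ^ 2 - Real.sinh t ^ 2 = 1 := Real.cosh_sq_sub_sinh_sq t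
  rw [Real.tanh_eq_sinh_div_cosh, div_pow]
  field_simp

/-- partial derivative in first variable as fderiv applied to (1,0) -/
lemma deriv_fst_eq (b : ℝ → ℝ → ℂ)
    (hb : ContDiffOn ℝ (⊤ : ℕ∞) (fun p : ℝ × ℝ => b p.1 p.2) Uset) {p : ℝ × ℝ} (hp : p ∈ Uset) :
    HasDerivAt (fun y => b y p.2)
      (fderiv ℝ (fun p : ℝ × ℝ => b p.1 p.2) p (1, 0)) p.1 := by
  have hdiff : DifferentiableAt ℝ (fun p : ℝ × ℝ => b p.1 p.2) p :=
    (hb.contDiffAt (hUopen.mem_nhds hp)).differentiableAt (by simp)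
  have hl : HasFDerivAt (fun y : ℝ => (y, p.2)) (ContinuousLinearMap.inl ℝ ℝ ℝ) p.1 :=
    hasFDerivAt_prodMk_left p.1 p.2
  have h2 := (hdiff.hasFDerivAt.comp p.1 hl).hasDerivAt
  exact h2


lemma deriv_snd_eq (b : ℝ → ℝ → ℂ)
    (hb : ContDiffOn ℝ (⊤ : ℕ∞) (fun p : ℝ × ℝ => b p.1 p.2) Uset) {p : ℝ × ℝ} (hp : p ∈ Uset) :
    HasDerivAt (fun η => b p.1 η)
      (fderiv ℝ (fun p : ℝ × ℝ => b p.1 p.2) p (0, 1)) p.2 := by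
  have hdiff : DifferentiableAt ℝ (fun p : ℝ × ℝ => b p.1 p.2) p :=
    (hb.contDiffAt (hUopen.mem_nhds hp)).differentiableAt (by simp)
  have hl : HasFDerivAt (fun η : ℝ => (p.1, η)) (ContinuousLinearMap.inr ℝ ℝ ℝ) p.2 :=
    hasFDerivAt_prodMk_right p.1 p.2
  have h2 := (hdiff.hasFDerivAt.comp p.2 hl).hasDerivAt
  exact h2

lemma chainA (b : ℝ → ℝ → ℂ)
    (hb : ContDiffOn ℝ (⊤ : ℕ∞) (fun p : ℝ × ℝ => b p.1 p.2) Uset) (t ξ : ℝ) :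
    Dfst (fun s η => b (-Real.tanh s) η) t ξ = DGrp b (-Real.tanh t) ξ := by
  have hp : ((-Real.tanh t, ξ) : ℝ × ℝ) ∈ Uset := ⟨tanh_mem t, Set.mem_univ _⟩
  have hg : HasDerivAt (fun y => b y ξ)
      (fderiv ℝ (fun p : ℝ × ℝ => b p.1 p.2) (-Real.tanh t, ξ) (1, 0)) (-Real.tanh t) :=
    deriv_fst_eq b hb hp
  have hcomp : HasDerivAt (fun s => b (-Real.tanh s) ξ)
      ((-(1 - Real.tanh t ^ 2)) •
        fderiv ℝ (fun p : ℝ × ℝ => b p.1 p.2) (-Real.tanh t, ξ) (1, 0)) t :=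
    by have := hg.scomp t (hasDerivAt_neg_tanh t); exact this
  simp only [Dfst, DGrp]
  rw [hcomp.deriv, hg.deriv, Complex.real_smul]
  push_cast
  ring

lemma smooth_fderiv_apply (b : ℝ → ℝ → ℂ)
    (hb : ContDiffOn ℝ (⊤ : ℕ∞) (fun p : ℝ × ℝ => b p.1 p.2) Uset) (v : ℝ × ℝ) :
    ContDiffOn ℝ (⊤ : ℕ∞) (fun p : ℝ × ℝ =>
      fderiv ℝ (fun q : ℝ × ℝ => b q.1 q.2) p v) Uset := by
  intro p hp
  have h1 : ContDiffAt ℝ (⊤ : ℕ∞) (fderiv ℝ (fun q : ℝ × ℝ => b q.1 q.2)) p :=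
    (hb.contDiffAt (hUopen.mem_nhds hp)).fderiv_right (by simp)
  exact (h1.clm_apply contDiffAt_const).contDiffWithinAt

lemma smooth_DGrp (b : ℝ → ℝ → ℂ)
    (hb : ContDiffOn ℝ (⊤ : ℕ∞) (fun p : ℝ × ℝ => b p.1 p.2) Uset) :
    ContDiffOn ℝ (⊤ : ℕ∞) (fun p : ℝ × ℝ => DGrp b p.1 p.2) Uset := by
  have hpoly : ContDiff ℝ (⊤ : ℕ∞) (fun p : ℝ × ℝ => -((1 : ℂ) - ((p.1 : ℂ)) ^ 2)) :=
    (contDiff_const.sub ((Complex.ofRealCLM.contDiff.comp contDiff_fst).pow 2)).neg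
  refine ((hpoly.contDiffOn.mul (smooth_fderiv_apply b hb (1, 0)))).congr ?_
  intro p hp
  simp only [DGrp]
  rw [(deriv_fst_eq b hb hp).deriv]

lemma smooth_Dsnd (b : ℝ → ℝ → ℂ)
    (hb : ContDiffOn ℝ (⊤ : ℕ∞) (fun p : ℝ × ℝ => b p.1 p.2) Uset) :
    ContDiffOn ℝ (⊤ : ℕ∞) (fun p : ℝ × ℝ => Dsnd b p.1 p.2) Uset := by
  refine (smooth_fderiv_apply b hb (0, 1)).congr ?_
  intro p hp
  simp only [Dsnd]
  rw [(deriv_snd_eq b hb hp).deriv]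

lemma smooth_dsnd_iter (a : ℝ → ℝ → ℂ)
    (ha : ContDiffOn ℝ (⊤ : ℕ∞) (fun p : ℝ × ℝ => a p.1 p.2) Uset) (α : ℕ) :
    ContDiffOn ℝ (⊤ : ℕ∞) (fun p : ℝ × ℝ => (Dsnd^[α] a) p.1 p.2) Uset := by
  induction α with
  | zero => exact ha
  | succ n ih =>
    rw [Function.iterate_succ_apply']
    exact smooth_Dsnd _ ih

lemma key (β : ℕ) : ∀ (b : ℝ → ℝ → ℂ),
    ContDiffOn ℝ (⊤ : ℕ∞) (fun p : ℝ × ℝ => b p.1 p.2) Uset → ∀ t ξ : ℝ,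
    (Dfst^[β] (fun s η => b (-Real.tanh s) η)) t ξ = (DGrp^[β] b) (-Real.tanh t) ξ := by
  induction β with
  | zero => intro b hb t ξ; rfl
  | succ n ih =>
    intro b hb t ξ
    rw [Function.iterate_succ_apply, Function.iterate_succ_apply]
    have h : Dfst (fun s η => b (-Real.tanh s) η) = fun s η => DGrp b (-Real.tanh s) η := by
      funext s η; exact chainA b hb s η
    rw [h]
    exact ih (DGrp b) (smooth_DGrp b hb) t ξ

lemma dsnd_comm (a : ℝ → ℝ → ℂ) (α : ℕ) :
    Dsnd^[α] (fun s η => a (-Real.tanh s) η)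
      = fun s η => (Dsnd^[α] a) (-Real.tanh s) η := by
  induction α with
  | zero => rfl
  | succ n ih =>
    rw [Function.iterate_succ_apply', Function.iterate_succ_apply', ih]
    rfl


/-- A smooth a on (-1,1)×ℝ satisfies the group Hörmander estimates
|𝔇ₓ^β ∂_ξ^α a| ≤ C(1+|ξ|)^{m-ρα+δβ} iff ã(t,ξ) := a(-tanh t, ξ) satisfies
the Euclidean Hörmander estimates. -/
theorem stmt_15 (m ρ δ : ℝ) (hρ0 : 0 ≤ ρ) (hρ1 : ρ ≤ 1) (hδ0 : 0 ≤ δ) (hδ1 : δ ≤ 1)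
    (a : ℝ → ℝ → ℂ)
    (ha : ContDiffOn ℝ (⊤ : ℕ∞) (fun p : ℝ × ℝ => a p.1 p.2)
      (Set.Ioo (-1 : ℝ) 1 ×ˢ Set.univ)) :
    (∀ α β : ℕ, ∃ C : ℝ, ∀ x ∈ Set.Ioo (-1 : ℝ) 1, ∀ ξ : ℝ,
        ‖(DGrp^[β] (Dsnd^[α] a)) x ξ‖
          ≤ C * (1 + |ξ|) ^ (m - ρ * α + δ * β)) ↔
    (∀ α β : ℕ, ∃ C : ℝ, ∀ t ξ : ℝ,
        ‖(Dfst^[β] (Dsnd^[α] (fun s η => a (-Real.tanh s) η))) t ξ‖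
          ≤ C * (1 + |ξ|) ^ (m - ρ * α + δ * β)) := by
  have ha' : ContDiffOn ℝ (⊤ : ℕ∞) (fun p : ℝ × ℝ => a p.1 p.2) Uset := ha
  constructor
  · intro H α β
    obtain ⟨C, hC⟩ := H α β
    refine ⟨C, fun t ξ => ?_⟩
    rw [dsnd_comm a α, key β (Dsnd^[α] a) (smooth_dsnd_iter a ha' α) t ξ]
    exact hC _ (tanh_mem t) ξ
  · intro H α β
    obtain ⟨C, hC⟩ := H α β
    refine ⟨C, fun x hx ξ => ?_⟩
    obtain ⟨t, ht⟩ := tanh_surj hx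
    have h2 := hC t ξ
    rw [dsnd_comm a α, key β (Dsnd^[α] a) (smooth_dsnd_iter a ha' α) t ξ, ht] at h2
    exact h2
end
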